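/- Let V : ℝ × E → E and p : ℝ × E → ℝ be smooth (ContDiff ℝ ⊤), and write V t := fun x => V (t, x). Assume: (i) div (V t) (x) = 0 for all t and x; (ii) the Euler equation holds: for all t and x, deriv (fun s => V (s, x)) t = −fderiv ℝ (V t) x (V t x) − gradient (fun y => p (t, y)) x. Then the Helmholtz vorticity equation holds: for all t and x, deriv (fun s => curl (V s) (x)) t = VectorField.lieBracket ℝ (fun y => curl (V t) (y)) (V t) x. -/

import Mathlib

open MeasureTheory RealInnerProductSpace

noncomputable section

abbrev E : Type := EuclideanSpace ℝ (Fin 3)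

/-- The `i`-th standard basis vector of `E`. -/
def e (i : Fin 3) : E := EuclideanSpace.single i 1

/-- The curl (vorticity) of a vector field on `E`. -/
def curl (X : E → E) (x : E) : E :=
  (WithLp.equiv 2 (Fin 3 → ℝ)).symm
    ![fderiv ℝ X x (e 1) 2 - fderiv ℝ X x (e 2) 1,
      fderiv ℝ X x (e 2) 0 - fderiv ℝ X x (e 0) 2,
      fderiv ℝ X x (e 0) 1 - fderiv ℝ X x (e 1) 0]

/-- The divergence of a vector field on `E`. -/
def div (X : E → E) (x : E) : ℝ := ∑ i, fderiv ℝ X x (e i) i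

/-- The cross product on `E`. -/
def cross (a b : E) : E :=
  (WithLp.equiv 2 (Fin 3 → ℝ)).symm
    ![a 1 * b 2 - a 2 * b 1,
      a 2 * b 0 - a 0 * b 2,
      a 0 * b 1 - a 1 * b 0]

infixl:74 " ×₃ " => cross

section Aux
variable {F' : Type*} [NormedAddCommGroup F'] [NormedSpace ℝ F']

lemma slice_hasFDerivAt (f : ℝ × E → F') {t : ℝ} {x : E} (hf : DifferentiableAt ℝ f (t, x)) :
    HasFDerivAt (fun y => f (t, y)) ((fderiv ℝ f (t, x)).comp (ContinuousLinearMap.inr ℝ ℝ E)) x :=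
  hf.hasFDerivAt.comp x (hasFDerivAt_prodMk_right t x)

lemma slice_fderiv (f : ℝ × E → F') {t : ℝ} {x : E} (hf : DifferentiableAt ℝ f (t, x)) (v : E) :
    fderiv ℝ (fun y => f (t, y)) x v = fderiv ℝ f (t, x) (0, v) := by
  rw [(slice_hasFDerivAt f hf).fderiv]; rfl

lemma time_hasDerivAt (f : ℝ × E → F') {t : ℝ} {x : E} (hf : DifferentiableAt ℝ f (t, x)) :
    HasDerivAt (fun s => f (s, x)) (fderiv ℝ f (t, x) (1, 0)) t := by
  have h := (hf.hasFDerivAt.comp t (hasFDerivAt_prodMk_left t x)).hasDerivAt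
  simpa [Function.comp_def] using h

lemma contDiff_fderiv_apply (f : ℝ × E → ℝ) (hf : ContDiff ℝ (⊤ : ℕ∞) f) (w : ℝ × E) :
    ContDiff ℝ (⊤ : ℕ∞) (fun z => fderiv ℝ f z w) :=
  (ContinuousLinearMap.apply ℝ ℝ w).contDiff.comp (hf.fderiv_right (by simp))

lemma symm2 (f : ℝ × E → ℝ) (hf : ContDiff ℝ (⊤ : ℕ∞) f) (z v w : ℝ × E) :
    fderiv ℝ (fun u => fderiv ℝ f u v) z w = fderiv ℝ (fun u => fderiv ℝ f u w) z v := by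
  have hsym := (hf.contDiffAt (x := z)).isSymmSndFDerivAt (n := (⊤ : ℕ∞)) (by rw [minSmoothness_of_isRCLikeNormedField]; exact WithTop.coe_le_coe.mpr (le_top : (2 : ℕ∞) ≤ ⊤))
  have hd : DifferentiableAt ℝ (fderiv ℝ f) z :=
    ((hf.fderiv_right (m := (⊤ : ℕ∞)) ((by simp))).differentiable (by simp)).differentiableAt
  have h1 : ∀ a : ℝ × E, fderiv ℝ (fun u => fderiv ℝ f u a) z
      = (ContinuousLinearMap.apply ℝ ℝ a).comp (fderiv ℝ (fderiv ℝ f) z) := fun a =>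
    (((ContinuousLinearMap.apply ℝ ℝ a).hasFDerivAt).comp z hd.hasFDerivAt).fderiv
  rw [h1 v, h1 w]
  exact hsym w v

lemma basis_decomp (v : E) : v = ∑ j, v j • e j := by
  ext i
  simp [e, EuclideanSpace.single_apply, Fin.sum_univ_three]
  fin_cases i <;> simp

lemma clm_apply_vec (L : (ℝ × E) →L[ℝ] ℝ) (v : E) :
    L (0, v) = ∑ j, v j * L (0, e j) := by
  have h : ((0 : ℝ), v) = ∑ j, v j • ((0, e j) : ℝ × E) := by
    rw [Prod.ext_iff]
    refine ⟨by rw [Prod.fst_sum]; simp, by rw [Prod.snd_sum]; simpa using basis_decomp v⟩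
  rw [h, map_sum]
  congr 1; ext j
  rw [_root_.map_smul]; rfl

lemma comp_apply_fderiv {G : Type*} [NormedAddCommGroup G] [NormedSpace ℝ G]
    {f : G → E} {z : G} (hf : DifferentiableAt ℝ f z) (k : Fin 3) (w : G) :
    fderiv ℝ (fun u => f u k) z w = fderiv ℝ f z w k := by
  have h : HasFDerivAt ((EuclideanSpace.proj (𝕜 := ℝ) k) ∘ f)
      ((EuclideanSpace.proj (𝕜 := ℝ) k).comp (fderiv ℝ f z)) z :=
    (EuclideanSpace.proj k).hasFDerivAt.comp z hf.hasFDerivAt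
  rw [show (fun u => f u k) = (⇑(EuclideanSpace.proj (𝕜 := ℝ) k)) ∘ f from rfl, h.fderiv]
  rfl

lemma gradient_component (f : E → ℝ) (x : E) (k : Fin 3) :
    gradient f x k = fderiv ℝ f x (e k) := by
  have h1 : gradient f x k = ⟪gradient f x, e k⟫ := by
    rw [e, EuclideanSpace.inner_single_right]; simp
  rw [h1]
  unfold gradient
  rw [InnerProductSpace.toDual_symm_apply]

end Aux

def gc (V : ℝ × E → E) (k : Fin 3) : ℝ × E → ℝ := fun z => V z k

def Pd (V : ℝ × E → E) (j k : Fin 3) : ℝ × E → ℝ := fun z => fderiv ℝ (gc V k) z (0, e j)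

section Main
variable {V : ℝ × E → E} (hV : ContDiff ℝ (⊤ : ℕ∞) V)
include hV

lemma hgc (k : Fin 3) : ContDiff ℝ (⊤ : ℕ∞) (gc V k) := by
  have h := ((EuclideanSpace.proj k : E →L[ℝ] ℝ).contDiff (n := (⊤ : ℕ∞))).comp hV
  exact h

lemma hPd (j k : Fin 3) : ContDiff ℝ (⊤ : ℕ∞) (Pd V j k) :=
  contDiff_fderiv_apply _ (hgc hV k) _

lemma slice_diff (t : ℝ) (x : E) : DifferentiableAt ℝ (fun y => V (t, y)) x :=
  (slice_hasFDerivAt V ((hV.differentiable (by simp)) (t, x))).differentiableAt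

lemma slice_comp (t : ℝ) (x : E) (v : E) (k : Fin 3) :
    fderiv ℝ (fun y => V (t, y)) x v k = fderiv ℝ (gc V k) (t, x) (0, v) := by
  rw [← comp_apply_fderiv (slice_diff hV t x) k v]
  exact slice_fderiv (gc V k) (((hgc hV k).differentiable (by simp)) (t, x)) v

lemma slice_comp_sum (t : ℝ) (x : E) (v : E) (k : Fin 3) :
    fderiv ℝ (fun y => V (t, y)) x v k = ∑ j, v j * Pd V j k (t, x) := by
  rw [slice_comp hV t x v k]
  exact clm_apply_vec (fderiv ℝ (gc V k) (t, x)) v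

lemma Pd_symm (z : ℝ × E) (j a k : Fin 3) :
    fderiv ℝ (Pd V j k) z (0, e a) = fderiv ℝ (Pd V a k) z (0, e j) :=
  symm2 (gc V k) (hgc hV k) z (0, e j) (0, e a)

lemma hPd_slice_diff (t : ℝ) (x : E) (j k : Fin 3) :
    DifferentiableAt ℝ (fun y => Pd V j k (t, y)) x :=
  (slice_hasFDerivAt (Pd V j k) (((hPd hV j k).differentiable (by simp)) (t, x))).differentiableAt

lemma Pd_slice_fderiv (t : ℝ) (x : E) (j k : Fin 3) (w : E) :
    fderiv ℝ (fun y => Pd V j k (t, y)) x w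
      = ∑ a, w a * fderiv ℝ (Pd V j k) (t, x) (0, e a) := by
  rw [slice_fderiv (Pd V j k) (((hPd hV j k).differentiable (by simp)) (t, x)) w]
  exact clm_apply_vec _ w

variable {p : ℝ × E → ℝ} (hp : ContDiff ℝ (⊤ : ℕ∞) p)
include hp

lemma euler_scalar
    (heuler : ∀ t x, deriv (fun s => V (s, x)) t
      = -fderiv ℝ (fun y => V (t, y)) x (V (t, x)) - gradient (fun y => p (t, y)) x)
    (z : ℝ × E) (k : Fin 3) :
    fderiv ℝ (gc V k) z (1, 0)
      = -(∑ j, V z j * Pd V j k z) - fderiv ℝ p z (0, e k) := by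
  obtain ⟨t, x⟩ := z
  have h := congrArg (fun w : E => w k) (heuler t x)
  simp only at h
  have hd : HasDerivAt (fun s => V (s, x)) (fderiv ℝ V (t, x) (1, 0)) t :=
    time_hasDerivAt V ((hV.differentiable (by simp)) (t, x))
  rw [hd.deriv] at h
  have hL : fderiv ℝ V (t, x) (1, 0) k = fderiv ℝ (gc V k) (t, x) (1, 0) :=
    (comp_apply_fderiv ((hV.differentiable (by simp)) (t, x)) k _).symm
  rw [hL] at h
  rw [h]
  have hsub : (-fderiv ℝ (fun y => V (t, y)) x (V (t, x)) - gradient (fun y => p (t, y)) x) k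
      = -(fderiv ℝ (fun y => V (t, y)) x (V (t, x)) k) - gradient (fun y => p (t, y)) x k := rfl
  rw [hsub, slice_comp_sum hV t x _ k, gradient_component]
  rw [slice_fderiv (f := p) (((hp.differentiable (by simp))) (t, x)) (e k)]

lemma mixed
    (heuler : ∀ t x, deriv (fun s => V (s, x)) t
      = -fderiv ℝ (fun y => V (t, y)) x (V (t, x)) - gradient (fun y => p (t, y)) x)
    (z : ℝ × E) (j k : Fin 3) :
    fderiv ℝ (Pd V j k) z (1, 0)
      = -(∑ a, (Pd V j a z * Pd V a k z + V z a * fderiv ℝ (Pd V a k) z (0, e j)))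
        - fderiv ℝ (fun u => fderiv ℝ p u (0, e k)) z (0, e j) := by
  have h1 : fderiv ℝ (Pd V j k) z (1, 0)
      = fderiv ℝ (fun u => fderiv ℝ (gc V k) u (1, 0)) z (0, e j) :=
    symm2 (gc V k) (hgc hV k) z (0, e j) (1, 0)
  rw [h1]
  have h2 : (fun u => fderiv ℝ (gc V k) u (1, 0))
      = fun u => -(∑ a, V u a * Pd V a k u) - fderiv ℝ p u (0, e k) :=
    funext fun u => euler_scalar hV hp heuler u k
  rw [h2]
  have hda : ∀ a : Fin 3, DifferentiableAt ℝ (fun u => V u a * Pd V a k u) z :=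
    fun a => (((hgc hV a).differentiable (by simp)) z).mul (((hPd hV a k).differentiable (by simp)) z)
  have hdsum : DifferentiableAt ℝ (fun u => ∑ a, V u a * Pd V a k u) z :=
    DifferentiableAt.fun_sum fun a _ => hda a
  have hdq : DifferentiableAt ℝ (fun u => fderiv ℝ p u (0, e k)) z :=
    ((contDiff_fderiv_apply p hp (0, e k)).differentiable (by simp)) z
  rw [fderiv_fun_sub hdsum.fun_neg hdq, fderiv_fun_neg, fderiv_fun_sum (fun a _ => hda a)]
  simp only [ContinuousLinearMap.sub_apply, ContinuousLinearMap.neg_apply,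
    ContinuousLinearMap.coe_sum', Finset.sum_apply]
  have hterm : ∀ a : Fin 3, fderiv ℝ (fun u => V u a * Pd V a k u) z (0, e j)
      = Pd V j a z * Pd V a k z + V z a * fderiv ℝ (Pd V a k) z (0, e j) := by
    intro a
    have hga : DifferentiableAt ℝ (fun u : ℝ × E => V u a) z := ((hgc hV a).differentiable (by simp)) z
    rw [fderiv_fun_mul hga (((hPd hV a k).differentiable (by simp)) z)]
    simp only [ContinuousLinearMap.add_apply, ContinuousLinearMap.smul_apply, smul_eq_mul]
    have hg : fderiv ℝ (fun u => V u a) z (0, e j) = Pd V j a z := rfl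
    rw [hg]
    ring
  rw [Finset.sum_congr rfl fun a _ => hterm a]
end Main


section Curl
variable {V : ℝ × E → E} (hV : ContDiff ℝ (⊤ : ℕ∞) V)
include hV

lemma curl_slice (t : ℝ) (x : E) :
    curl (fun y => V (t, y)) x =
      (WithLp.equiv 2 (Fin 3 → ℝ)).symm
        ![Pd V 1 2 (t, x) - Pd V 2 1 (t, x),
          Pd V 2 0 (t, x) - Pd V 0 2 (t, x),
          Pd V 0 1 (t, x) - Pd V 1 0 (t, x)] := by
  unfold curl
  congr 1
  have h : ∀ v k, fderiv ℝ (fun y => V (t, y)) x v k = fderiv ℝ (gc V k) (t, x) (0, v) :=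
    slice_comp hV t x
  rw [h (e 1) 2, h (e 2) 1, h (e 2) 0, h (e 0) 2, h (e 0) 1, h (e 1) 0]
  rfl

lemma trace_zero (hdiv : ∀ t x, div (fun y => V (t, y)) x = 0) (t : ℝ) (x : E) :
    Pd V 0 0 (t, x) + Pd V 1 1 (t, x) + Pd V 2 2 (t, x) = 0 := by
  have h := hdiv t x
  unfold div at h
  rw [Fin.sum_univ_three] at h
  rw [slice_comp hV t x (e 0) 0, slice_comp hV t x (e 1) 1, slice_comp hV t x (e 2) 2] at h
  exact h
end Curl

/-- The Euler equation for an ideal incompressible fluid implies the Helmholtz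
vorticity equation `∂ₜ (rot V) = [rot V, V]`. -/
theorem helmholtz (V : ℝ × E → E) (p : ℝ × E → ℝ)
    (hV : ContDiff ℝ (⊤ : ℕ∞) V) (hp : ContDiff ℝ (⊤ : ℕ∞) p)
    (hdiv : ∀ t x, div (fun y => V (t, y)) x = 0)
    (heuler : ∀ t x, deriv (fun s => V (s, x)) t
      = -fderiv ℝ (fun y => V (t, y)) x (V (t, x)) - gradient (fun y => p (t, y)) x) :
    ∀ t x, deriv (fun s => curl (fun y => V (s, y)) x) t
      = VectorField.lieBracket ℝ (fun y => curl (fun z => V (t, z)) y) (fun y => V (t, y)) x := by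
  intro t x
  have hc : ∀ (j k : Fin 3), HasDerivAt (fun s => Pd V j k (s, x))
      (fderiv ℝ (Pd V j k) (t, x) (1, 0)) t :=
    fun j k => time_hasDerivAt (Pd V j k) (((hPd hV j k).differentiable (by simp)) (t, x))
  have hpi : HasDerivAt
      (fun s => (![Pd V 1 2 (s, x) - Pd V 2 1 (s, x),
                   Pd V 2 0 (s, x) - Pd V 0 2 (s, x),
                   Pd V 0 1 (s, x) - Pd V 1 0 (s, x)] : Fin 3 → ℝ))
      ![fderiv ℝ (Pd V 1 2) (t, x) (1, 0) - fderiv ℝ (Pd V 2 1) (t, x) (1, 0),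
        fderiv ℝ (Pd V 2 0) (t, x) (1, 0) - fderiv ℝ (Pd V 0 2) (t, x) (1, 0),
        fderiv ℝ (Pd V 0 1) (t, x) (1, 0) - fderiv ℝ (Pd V 1 0) (t, x) (1, 0)] t := by
    rw [hasDerivAt_pi]
    intro i
    fin_cases i <;> simp only [Matrix.cons_val_zero, Matrix.cons_val_one, Matrix.head_cons,
      Matrix.cons_val_two, Matrix.tail_cons] <;> exact (hc _ _).sub (hc _ _)
  have hW : HasDerivAt (fun s => curl (fun y => V (s, y)) x)
      ((WithLp.equiv 2 (Fin 3 → ℝ)).symm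
        ![fderiv ℝ (Pd V 1 2) (t, x) (1, 0) - fderiv ℝ (Pd V 2 1) (t, x) (1, 0),
          fderiv ℝ (Pd V 2 0) (t, x) (1, 0) - fderiv ℝ (Pd V 0 2) (t, x) (1, 0),
          fderiv ℝ (Pd V 0 1) (t, x) (1, 0) - fderiv ℝ (Pd V 1 0) (t, x) (1, 0)]) t := by
    have hfun : (fun s => curl (fun y => V (s, y)) x)
        = fun s => (WithLp.equiv 2 (Fin 3 → ℝ)).symm
            ![Pd V 1 2 (s, x) - Pd V 2 1 (s, x),
              Pd V 2 0 (s, x) - Pd V 0 2 (s, x),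
              Pd V 0 1 (s, x) - Pd V 1 0 (s, x)] := funext fun s => curl_slice hV s x
    rw [hfun]
    exact ((PiLp.continuousLinearEquiv 2 ℝ (fun _ : Fin 3 => ℝ)).symm.toContinuousLinearMap.hasFDerivAt).comp_hasDerivAt t hpi
  rw [hW.deriv]

  have hω : (fun y => curl (fun z => V (t, z)) y)
      = fun y => (WithLp.equiv 2 (Fin 3 → ℝ)).symm
          ![Pd V 1 2 (t, y) - Pd V 2 1 (t, y),
            Pd V 2 0 (t, y) - Pd V 0 2 (t, y),
            Pd V 0 1 (t, y) - Pd V 1 0 (t, y)] := funext fun y => curl_slice hV t y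
  have hωd : DifferentiableAt ℝ (fun y => curl (fun z => V (t, z)) y) x := by
    rw [hω]
    have h1 : DifferentiableAt ℝ
        (fun y => (![Pd V 1 2 (t, y) - Pd V 2 1 (t, y),
                     Pd V 2 0 (t, y) - Pd V 0 2 (t, y),
                     Pd V 0 1 (t, y) - Pd V 1 0 (t, y)] : Fin 3 → ℝ)) x := by
      apply differentiableAt_pi.2
      intro i
      fin_cases i <;> simp only [Matrix.cons_val_zero, Matrix.cons_val_one, Matrix.head_cons,
        Matrix.cons_val_two, Matrix.tail_cons] <;>
        exact (hPd_slice_diff hV t x _ _).sub (hPd_slice_diff hV t x _ _)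
    exact ((PiLp.continuousLinearEquiv 2 ℝ fun _ : Fin 3 => ℝ).symm.differentiableAt).comp x h1
  have htr := trace_zero hV hdiv t x
  refine PiLp.ext fun i => ?_
  have happly : ∀ (a b : E) (i : Fin 3), (a - b) i = a i - b i := fun _ _ _ => rfl
  simp only [VectorField.lieBracket]
  rw [happly]
  rw [slice_comp_sum hV t x _ i]
  rw [← comp_apply_fderiv hωd i (V (t, x))]
  fin_cases i
  · simp only [Fin.zero_eta, Fin.mk_one, Fin.reduceFinMk, Fin.isValue]
    rw [show (fun u => curl (fun z => V (t, z)) u 0) = fun u => Pd V 1 2 (t, u) - Pd V 2 1 (t, u)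
      from funext fun y => by rw [curl_slice hV t y]; rfl]
    rw [fderiv_fun_sub (hPd_slice_diff hV t x 1 2) (hPd_slice_diff hV t x 2 1)]
    rw [ContinuousLinearMap.sub_apply]
    rw [Pd_slice_fderiv hV t x 1 2 _, Pd_slice_fderiv hV t x 2 1 _]
    rw [curl_slice hV t x]
    rw [mixed hV hp heuler (t, x) 1 2, mixed hV hp heuler (t, x) 2 1]
    rw [show fderiv ℝ (fun u => fderiv ℝ p u (0, e 2)) (t, x) (0, e 1)
        = fderiv ℝ (fun u => fderiv ℝ p u (0, e 1)) (t, x) (0, e 2) from symm2 p hp _ _ _]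
    simp only [WithLp.equiv_symm_apply, PiLp.toLp_apply, Fin.sum_univ_three, Matrix.cons_val_zero,
      Matrix.cons_val_one, Matrix.head_cons, Matrix.cons_val_two, Matrix.tail_cons,
      Fin.isValue]
    rw [Pd_symm hV (t, x) 1 0 2, Pd_symm hV (t, x) 1 2 2,
        Pd_symm hV (t, x) 2 0 1, Pd_symm hV (t, x) 2 1 1]
    linear_combination (Pd V 2 1 (t, x) - Pd V 1 2 (t, x)) * htr
  · simp only [Fin.zero_eta, Fin.mk_one, Fin.reduceFinMk, Fin.isValue]
    rw [show (fun u => curl (fun z => V (t, z)) u 1) = fun u => Pd V 2 0 (t, u) - Pd V 0 2 (t, u)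
      from funext fun y => by rw [curl_slice hV t y]; rfl]
    rw [fderiv_fun_sub (hPd_slice_diff hV t x 2 0) (hPd_slice_diff hV t x 0 2)]
    rw [ContinuousLinearMap.sub_apply]
    rw [Pd_slice_fderiv hV t x 2 0 _, Pd_slice_fderiv hV t x 0 2 _]
    rw [curl_slice hV t x]
    rw [mixed hV hp heuler (t, x) 2 0, mixed hV hp heuler (t, x) 0 2]
    rw [show fderiv ℝ (fun u => fderiv ℝ p u (0, e 0)) (t, x) (0, e 2)
        = fderiv ℝ (fun u => fderiv ℝ p u (0, e 2)) (t, x) (0, e 0) from symm2 p hp _ _ _]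
    simp only [WithLp.equiv_symm_apply, PiLp.toLp_apply, Fin.sum_univ_three, Matrix.cons_val_zero,
      Matrix.cons_val_one, Matrix.head_cons, Matrix.cons_val_two, Matrix.tail_cons,
      Fin.isValue]
    rw [Pd_symm hV (t, x) 2 0 0, Pd_symm hV (t, x) 2 1 0,
        Pd_symm hV (t, x) 0 1 2, Pd_symm hV (t, x) 0 2 2]
    linear_combination (Pd V 0 2 (t, x) - Pd V 2 0 (t, x)) * htr
  · simp only [Fin.zero_eta, Fin.mk_one, Fin.reduceFinMk, Fin.isValue]
    rw [show (fun u => curl (fun z => V (t, z)) u 2) = fun u => Pd V 0 1 (t, u) - Pd V 1 0 (t, u)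
      from funext fun y => by rw [curl_slice hV t y]; rfl]
    rw [fderiv_fun_sub (hPd_slice_diff hV t x 0 1) (hPd_slice_diff hV t x 1 0)]
    rw [ContinuousLinearMap.sub_apply]
    rw [Pd_slice_fderiv hV t x 0 1 _, Pd_slice_fderiv hV t x 1 0 _]
    rw [curl_slice hV t x]
    rw [mixed hV hp heuler (t, x) 0 1, mixed hV hp heuler (t, x) 1 0]
    rw [show fderiv ℝ (fun u => fderiv ℝ p u (0, e 1)) (t, x) (0, e 0)
        = fderiv ℝ (fun u => fderiv ℝ p u (0, e 0)) (t, x) (0, e 1) from symm2 p hp _ _ _]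
    simp only [WithLp.equiv_symm_apply, PiLp.toLp_apply, Fin.sum_univ_three, Matrix.cons_val_zero,
      Matrix.cons_val_one, Matrix.head_cons, Matrix.cons_val_two, Matrix.tail_cons,
      Fin.isValue]
    rw [Pd_symm hV (t, x) 0 1 1, Pd_symm hV (t, x) 0 2 1,
        Pd_symm hV (t, x) 1 0 0, Pd_symm hV (t, x) 1 2 0]
    linear_combination (Pd V 1 0 (t, x) - Pd V 0 1 (t, x)) * htr
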